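/- arXiv:2307.09735 — 4 statements merged into one kernel-verified Lean document; each statement's English description precedes it below -/
import Mathlib

section
/- The compression-and-randomisation cipher is perfect: for every message m ∈ M with P(m) > 0 and every ciphertext e ∈ {0,1}^l with P(E = e) > 0, the posterior equals the prior, i.e. P(message = m | E = e) = P(m). -/
/-!
Given the message, the ciphertext together with the bits of `(k, r)` that did not enter it
(the padding at positions `< |x|`, the key beyond `|x|`) determines `(k, r)`, so every ciphertext
has exactly `2 ^ l` preimages. The likelihood of `e` is therefore the same for all messages, and
Bayes' rule returns the prior.
-/

open Finset

/-- The compression-and-randomisation cipher. -/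
def encrypt {l : ℕ} (x : List Bool) (k r : Fin l → Bool) : Fin l → Bool :=
  fun i => if h : (i : ℕ) < x.length then Bool.xor (x.get ⟨i, h⟩) (k i) else r i

def encryptEquiv {l : ℕ} (x : List Bool) :
    (Fin l → Bool) × (Fin l → Bool) ≃ (Fin l → Bool) × (Fin l → Bool) where
  toFun kr := (encrypt x kr.1 kr.2, fun i => if (i : ℕ) < x.length then kr.2 i else kr.1 i)
  invFun cu :=
    (fun i => if h : (i : ℕ) < x.length then Bool.xor (x.get ⟨i, h⟩) (cu.1 i) else cu.2 i,
     fun i => if (i : ℕ) < x.length then cu.2 i else cu.1 i)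
  left_inv kr := by
    ext i <;> by_cases h : (i : ℕ) < x.length <;> simp [encrypt, h]
  right_inv cu := by
    ext i <;> by_cases h : (i : ℕ) < x.length <;> simp [encrypt, h]

theorem card_filter_encrypt_eq {l : ℕ} (x : List Bool) (e : Fin l → Bool) :
    #{kr : (Fin l → Bool) × (Fin l → Bool) | encrypt x kr.1 kr.2 = e} = 2 ^ l := by
  calc #{kr : (Fin l → Bool) × (Fin l → Bool) | encrypt x kr.1 kr.2 = e}
      = #{cu : (Fin l → Bool) × (Fin l → Bool) | cu.1 = e} :=
        card_equiv (encryptEquiv x) (by simp [encryptEquiv])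
    _ = #({e} ×ˢ univ) := by congr 1; ext ⟨c, u⟩; simp [eq_comm]
    _ = 2 ^ l := by simp

theorem perfect_secrecy_general
    {M : Type*} [Fintype M]
    (P : M → ℝ) (hP1 : ∑ m, P m = 1)
    (φ : M → List Bool)
    (l : ℕ)
    (m : M) (e : Fin l → Bool) :
    (P m * (((univ.filter (fun kr : (Fin l → Bool) × (Fin l → Bool) =>
          encrypt (φ m) kr.1 kr.2 = e)).card : ℝ) / ((2 ^ l) * (2 ^ l)))) /
      (∑ m', P m' *
        (((univ.filter (fun kr : (Fin l → Bool) × (Fin l → Bool) =>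
            encrypt (φ m') kr.1 kr.2 = e)).card : ℝ) / ((2 ^ l) * (2 ^ l)))) =
      P m := by
  simp only [card_filter_encrypt_eq, ← sum_mul, hP1, one_mul]
  exact mul_div_cancel_right₀ (P m) (by positivity)

/-- Perfect secrecy: for every message `m` with `P(m) > 0` and every ciphertext
`e` with `P(E = e) > 0`, the posterior `P(m | e)` (joint over marginal) equals
the prior `P(m)`. -/
theorem perfect_secrecy
    {M : Type*} [Fintype M] [Nonempty M]
    (P : M → ℝ) (hP0 : ∀ m, 0 ≤ P m) (hP1 : ∑ m, P m = 1)
    (φ : M → List Bool) (hinj : Function.Injective φ)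
    (hpf : ∀ m m', m ≠ m' → ¬ (φ m <+: φ m'))
    (l : ℕ) (hl : ∀ m, (φ m).length ≤ l) (hmax : ∃ m, (φ m).length = l)
    (m : M) (e : Fin l → Bool)
    (hm : 0 < P m)
    (he : 0 < ∑ m', P m' *
      (((univ.filter (fun kr : (Fin l → Bool) × (Fin l → Bool) =>
          encrypt (φ m') kr.1 kr.2 = e)).card : ℝ) / ((2 ^ l) * (2 ^ l)))) :
    (P m * (((univ.filter (fun kr : (Fin l → Bool) × (Fin l → Bool) =>
          encrypt (φ m) kr.1 kr.2 = e)).card : ℝ) / ((2 ^ l) * (2 ^ l)))) /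
      (∑ m', P m' *
        (((univ.filter (fun kr : (Fin l → Bool) × (Fin l → Bool) =>
            encrypt (φ m') kr.1 kr.2 = e)).card : ℝ) / ((2 ^ l) * (2 ^ l)))) =
      P m :=
  perfect_secrecy_general P hP1 φ l m e
end

section
/- If λ is a Huffman (average-length-optimal prefix-free) code for distribution P on M, so that its average length is less than H(P) + 1, then the trimmed code λ^tr is a prefix-free code with maximal codeword length at most ⌈log₂ L⌉ + 1 and average codeword length less than H(P) + 2. -/
open Finset

/-- The `t`-bit binary representation of `i` (as a list of `t` bits). -/
def binRep (t i : ℕ) : List Bool := List.ofFn (fun j : Fin t => i.testBit j)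

/-- The trimmed code `λ^tr`: keep `0 · λ(m_i)` when `|λ(m_i)| ≤ ⌈log₂ L⌉`,
otherwise replace it by `1 · bin_{⌈log₂ L⌉}(i)`. -/
def trimmed {L : ℕ} (lam : Fin L → List Bool) : Fin L → List Bool :=
  fun i =>
    if (lam i).length ≤ Nat.clog 2 L then false :: lam i
    else true :: binRep (Nat.clog 2 L) (i : ℕ)

/-! The leading bit separates the kept codewords from the replaced ones; among the replaced
ones all codewords have the same length, so a prefix is an equality, and binary
representations of numbers below `2 ^ ⌈log₂ L⌉` are distinct. Each codeword grows by at most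
one bit, so the average length grows by at most one. -/

@[simp]
lemma binRep_length (t i : ℕ) : (binRep t i).length = t := by
  simp [binRep]

lemma binRep_injOn (t : ℕ) : Set.InjOn (binRep t) (Set.Iio (2 ^ t)) := by
  intro i hi j hj h
  rw [binRep, binRep, List.ofFn_inj] at h
  refine Nat.eq_of_testBit_eq fun k => ?_
  by_cases hk : k < t
  · exact congrFun h ⟨k, hk⟩
  · have hpow : 2 ^ t ≤ 2 ^ k := Nat.pow_le_pow_right two_pos (not_lt.mp hk)
    rw [Nat.testBit_lt_two_pow (lt_of_lt_of_le hi hpow),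
      Nat.testBit_lt_two_pow (lt_of_lt_of_le hj hpow)]

def PrefixFree {ι α : Type*} (c : ι → List α) : Prop :=
  ∀ i j, i ≠ j → ¬ c i <+: c j

section Trimmed

variable {L : ℕ} (lam : Fin L → List Bool)

lemma binRep_fin_injective :
    Function.Injective fun i : Fin L => binRep (Nat.clog 2 L) i := by
  have hL : L ≤ 2 ^ Nat.clog 2 L := Nat.le_pow_clog one_lt_two L
  intro i j h
  exact Fin.ext <| binRep_injOn _ (lt_of_lt_of_le i.isLt hL) (lt_of_lt_of_le j.isLt hL) h

lemma PrefixFree.trimmed (hpf : PrefixFree lam) : PrefixFree (trimmed lam) := by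
  intro i j hij hpre
  unfold _root_.trimmed at hpre
  split_ifs at hpre with hi hj hj
  · exact hpf i j hij (List.cons_prefix_cons.mp hpre).2
  · simp at hpre
  · simp at hpre
  · have hbin := (List.cons_prefix_cons.mp hpre).2
    exact hij <| binRep_fin_injective <| hbin.eq_of_length (by simp)

lemma trimmed_length_le_clog_add_one (i : Fin L) :
    (trimmed lam i).length ≤ Nat.clog 2 L + 1 := by
  unfold trimmed
  split_ifs with hi <;> simp [hi]

lemma trimmed_length_le_add_one (i : Fin L) :
    (trimmed lam i).length ≤ (lam i).length + 1 := by
  unfold trimmed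
  split_ifs with hi
  · simp
  · simp only [List.length_cons, binRep_length]
    omega

end Trimmed

lemma sum_mul_le_sum_mul_add_one {ι : Type*} [Fintype ι] {P f g : ι → ℝ}
    (hP0 : ∀ i, 0 ≤ P i) (hP1 : ∑ i, P i = 1) (hfg : ∀ i, f i ≤ g i + 1) :
    ∑ i, P i * f i ≤ ∑ i, P i * g i + 1 :=
  calc ∑ i, P i * f i ≤ ∑ i, P i * (g i + 1) :=
        Finset.sum_le_sum fun i _ => mul_le_mul_of_nonneg_left (hfg i) (hP0 i)
    _ = ∑ i, P i * g i + 1 := by simp only [mul_add, mul_one, Finset.sum_add_distrib, hP1]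

theorem trimmed_of_huffman_general {L : ℕ}
    (lam : Fin L → List Bool)
    (hpf : ∀ i j : Fin L, i ≠ j → ¬ (lam i <+: lam j))
    (P : Fin L → ℝ) (hP0 : ∀ i, 0 ≤ P i) (hP1 : ∑ i, P i = 1)
    (havg : ∑ i, P i * ((lam i).length : ℝ) <
      (-∑ i, P i * Real.logb 2 (P i)) + 1) :
    (∀ i j : Fin L, i ≠ j → ¬ (trimmed lam i <+: trimmed lam j)) ∧
    (∀ i : Fin L, (trimmed lam i).length ≤ Nat.clog 2 L + 1) ∧
    ∑ i, P i * ((trimmed lam i).length : ℝ) <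
      (-∑ i, P i * Real.logb 2 (P i)) + 2 := by
  have hgrow : ∑ i, P i * ((trimmed lam i).length : ℝ) ≤
      ∑ i, P i * ((lam i).length : ℝ) + 1 :=
    sum_mul_le_sum_mul_add_one hP0 hP1 fun i => by
      exact_mod_cast trimmed_length_le_add_one lam i
  exact ⟨PrefixFree.trimmed lam hpf, trimmed_length_le_clog_add_one lam, by linarith⟩

/-- If `λ` is an (e.g. Huffman) prefix-free code with average length below
`H(P) + 1`, then the trimmed code `λ^tr` is prefix-free, has maximal codeword
length at most `⌈log₂ L⌉ + 1`, and average length below `H(P) + 2`. -/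
theorem trimmed_of_huffman {L : ℕ} (hL : 1 ≤ L)
    (lam : Fin L → List Bool) (hinj : Function.Injective lam)
    (hpf : ∀ i j : Fin L, i ≠ j → ¬ (lam i <+: lam j))
    (P : Fin L → ℝ) (hP0 : ∀ i, 0 ≤ P i) (hP1 : ∑ i, P i = 1)
    (havg : ∑ i, P i * ((lam i).length : ℝ) <
      (-∑ i, P i * Real.logb 2 (P i)) + 1) :
    (∀ i j : Fin L, i ≠ j → ¬ (trimmed lam i <+: trimmed lam j)) ∧
    (∀ i : Fin L, (trimmed lam i).length ≤ Nat.clog 2 L + 1) ∧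
    ∑ i, P i * ((trimmed lam i).length : ℝ) <
      (-∑ i, P i * Real.logb 2 (P i)) + 2 :=
  trimmed_of_huffman_general lam hpf P hP0 hP1 havg
end

section
/- In the compression-and-randomisation cipher, the ciphertext random variable E is independent of the message random variable M': the joint distribution factorizes, P(M' = m, E = e) = P(m) · 2^{-l} for all m ∈ M and e ∈ {0,1}^l. -/
/-!
Fix a codeword `x`. The map `(k, r) ↦ (E(x, k, r), s)`, where `s` collects the bits the encryption
discards (`r` on the positions covered by `x`, `k` beyond them), is an involution of the space of
(key, padding) pairs. Hence every ciphertext has exactly `2^l` preimages among the `4^l` pairs,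
whatever the message.
-/

open Finset

theorem card_filter_fst_eq {α β : Type*} [Fintype α] [Fintype β] [DecidableEq α] (a : α) :
    #{p : α × β | p.1 = a} = Fintype.card β := by
  have : ({p : α × β | p.1 = a} : Finset (α × β)) = {a} ×ˢ univ := by
    ext ⟨b, c⟩; simp [eq_comm]
  rw [this, card_product, card_singleton, one_mul, card_univ]

section

variable {l : ℕ} (x : List Bool)

def encryptWithDiscarded (kr : (Fin l → Bool) × (Fin l → Bool)) :
    (Fin l → Bool) × (Fin l → Bool) :=
  (encrypt x kr.1 kr.2, fun i => if (i : ℕ) < x.length then kr.2 i else kr.1 i)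

theorem encryptWithDiscarded_involutive :
    Function.Involutive (encryptWithDiscarded (l := l) x) := by
  rintro ⟨k, r⟩
  ext i <;> by_cases h : (i : ℕ) < x.length <;> simp [encryptWithDiscarded, encrypt, h]

theorem card_encrypt_fiber (e : Fin l → Bool) :
    #{kr : (Fin l → Bool) × (Fin l → Bool) | encrypt x kr.1 kr.2 = e} = 2 ^ l := by
  have hσ := encryptWithDiscarded_involutive (l := l) x
  calc #{kr : (Fin l → Bool) × (Fin l → Bool) | encrypt x kr.1 kr.2 = e}
      = #{p : (Fin l → Bool) × (Fin l → Bool) | p.1 = e} :=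
        card_nbij' (encryptWithDiscarded x) (encryptWithDiscarded x)
          (fun _ h => by simpa [encryptWithDiscarded] using h)
          (fun p h => by
            rw [mem_coe, mem_filter] at h ⊢
            exact ⟨mem_univ _, (congrArg Prod.fst (hσ p)).trans h.2⟩)
          (fun kr _ => hσ kr) (fun p _ => hσ p)
    _ = 2 ^ l := by simp [card_filter_fst_eq]

end

theorem joint_factorizes_general
    {M : Type*} (P : M → ℝ) (φ : M → List Bool) (l : ℕ) (m : M) (e : Fin l → Bool) :
    P m * (((univ.filter (fun kr : (Fin l → Bool) × (Fin l → Bool) =>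
        encrypt (φ m) kr.1 kr.2 = e)).card : ℝ) / ((2 ^ l) * (2 ^ l))) =
      P m * (1 / 2 ^ l) := by
  rw [card_encrypt_fiber]
  push_cast
  field_simp

/-- The joint distribution of message and ciphertext factorizes:
`P(M' = m, E = e) = P(m) · 2^{-l}`, i.e. the ciphertext is independent of the
message. -/
theorem joint_factorizes
    {M : Type*} [Fintype M] [Nonempty M]
    (P : M → ℝ) (hP0 : ∀ m, 0 ≤ P m) (hP1 : ∑ m, P m = 1)
    (φ : M → List Bool) (hinj : Function.Injective φ)
    (hpf : ∀ m m', m ≠ m' → ¬ (φ m <+: φ m'))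
    (l : ℕ) (hl : ∀ m, (φ m).length ≤ l) (hmax : ∃ m, (φ m).length = l)
    (m : M) (e : Fin l → Bool) :
    P m * (((univ.filter (fun kr : (Fin l → Bool) × (Fin l → Bool) =>
        encrypt (φ m) kr.1 kr.2 = e)).card : ℝ) / ((2 ^ l) * (2 ^ l))) =
      P m * (1 / 2 ^ l) :=
  joint_factorizes_general P φ l m e
end

section
/- For the compression-and-randomisation cipher, the mutual information between the message M' and the ciphertext E is zero: I(M'; E) = 0. -/
/-!
On the first `|φ m|` positions the cipher is a one-time pad and on the rest it outputs fresh
uniform bits, so for every message each ciphertext bit is produced by exactly two of the four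
(key bit, pad bit) pairs. Hence `P(M' = m, E = e) = P(m) · 2⁻ˡ`: the ciphertext is uniform
and independent of the message, and the joint entropy splits as `H(M') + H(E)`.
-/

open Finset

/-- The joint probability `P(M' = m, E = e)` of message `m` and ciphertext `e`
(keys and padding bits i.i.d. uniform, independent of the message). -/
noncomputable def pJoint {M : Type*} [Fintype M] (P : M → ℝ) (φ : M → List Bool) (l : ℕ)
    (m : M) (e : Fin l → Bool) : ℝ :=
  P m * (((univ.filter (fun kr : (Fin l → Bool) × (Fin l → Bool) =>
      encrypt (φ m) kr.1 kr.2 = e)).card : ℝ) / ((2 ^ l) * (2 ^ l)))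

theorem mul_logb_mul (a b c : ℝ) :
    a * b * Real.logb c (a * b) = b * (a * Real.logb c a) + a * (b * Real.logb c b) := by
  rcases eq_or_ne a 0 with rfl | ha
  · simp
  rcases eq_or_ne b 0 with rfl | hb
  · simp
  rw [Real.logb_mul ha hb]
  ring

theorem mutualInfo_eq_zero_of_eq_mul {α β : Type*} [Fintype α] [Fintype β]
    (p : α → β → ℝ) (P : α → ℝ) (Q : β → ℝ) (hp : ∀ a b, p a b = P a * Q b)
    (hP : ∑ a, P a = 1) (hQ : ∑ b, Q b = 1) :
    (-∑ a, P a * Real.logb 2 (P a)) +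
      (-∑ b, (∑ a, p a b) * Real.logb 2 (∑ a, p a b)) -
      (-∑ a, ∑ b, p a b * Real.logb 2 (p a b)) = 0 := by
  simp only [hp, ← sum_mul, hP, one_mul, mul_logb_mul, sum_add_distrib, ← mul_sum, hQ]
  ring

theorem pJoint_eq_mul {M : Type*} [Fintype M] (P : M → ℝ) (φ : M → List Bool) (l : ℕ)
    (m : M) (e : Fin l → Bool) : pJoint P φ l m e = P m * (2 ^ l)⁻¹ := by
  rw [pJoint, card_filter_encrypt_eq]
  push_cast
  field_simp

theorem mutual_information_zero_general
    {M : Type*} [Fintype M]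
    (P : M → ℝ) (hP1 : ∑ m, P m = 1)
    (φ : M → List Bool)
    (l : ℕ) :
    (-∑ m, P m * Real.logb 2 (P m)) +
      (-∑ e : Fin l → Bool,
          (∑ m, pJoint P φ l m e) * Real.logb 2 (∑ m, pJoint P φ l m e)) -
      (-∑ m, ∑ e : Fin l → Bool,
          pJoint P φ l m e * Real.logb 2 (pJoint P φ l m e)) = 0 := by
  refine mutualInfo_eq_zero_of_eq_mul _ P (fun _ => (2 ^ l)⁻¹) (pJoint_eq_mul P φ l) hP1 ?_
  simp

/-- The mutual information between message and ciphertext is zero: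
`I(M';E) = H(M') + H(E) − H(M',E) = 0`. -/
theorem mutual_information_zero
    {M : Type*} [Fintype M] [Nonempty M]
    (P : M → ℝ) (hP0 : ∀ m, 0 ≤ P m) (hP1 : ∑ m, P m = 1)
    (φ : M → List Bool) (hinj : Function.Injective φ)
    (hpf : ∀ m m', m ≠ m' → ¬ (φ m <+: φ m'))
    (l : ℕ) (hl : ∀ m, (φ m).length ≤ l) (hmax : ∃ m, (φ m).length = l) :
    (-∑ m, P m * Real.logb 2 (P m)) +
      (-∑ e : Fin l → Bool,
          (∑ m, pJoint P φ l m e) * Real.logb 2 (∑ m, pJoint P φ l m e)) -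
      (-∑ m, ∑ e : Fin l → Bool,
          pJoint P φ l m e * Real.logb 2 (pJoint P φ l m e)) = 0 :=
  mutual_information_zero_general P hP1 φ l
end
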